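/- Let ω ∈ [0,1], let Q = [[D, −C], [−B, A]] with A ∈ C^{m×m}, B ∈ C^{m×n}, C ∈ C^{n×m}, D ∈ C^{n×n}, and suppose Q_ω is a nonsingular M-matrix with Q_ω·1 > 0. Let Q̃ = [[D̃, −C̃], [−B̃, Ã]] be a real nonsingular M-matrix with Q̃ ≤ Q_ω and Q̃·1 > 0, and let Φ̃ be the minimal nonnegative solution of XC̃X − XD̃ − ÃX + B̃ = 0 (i.e., Φ̃ ≥ 0 solves it and Φ̃ ≤ Z entrywise for every entrywise nonnegative solution Z). Then the NARE XCX − XD − AX + B = 0 has exactly one solution Φ ∈ C^{m×n} satisfying |Φ| ≤ Φ̃ entrywise. -/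

import Mathlib

open Matrix Filter Kronecker

noncomputable section

/-- The ω-weighted linear functional `z ↦ ω·Re z + (1-ω)·Im z`. -/
def wlin (ω : ℝ) (z : ℂ) : ℝ := ω * z.re + (1 - ω) * z.im

/-- The ω-comparison matrix of a complex square matrix. -/
def omegaComp {N : Type*} [DecidableEq N] (ω : ℝ) (B : Matrix N N ℂ) : Matrix N N ℝ :=
  Matrix.of fun i j => if i = j then wlin ω (B i i) else -‖B i j‖

/-- A real square matrix is a nonsingular M-matrix: nonpositive off-diagonal entries and
`M *ᵥ u > 0` entrywise for some entrywise positive `u`. -/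
def IsNonsingMMatrix {N : Type*} [Fintype N] (M : Matrix N N ℝ) : Prop :=
  (∀ i j, i ≠ j → M i j ≤ 0) ∧ ∃ u : N → ℝ, (∀ i, 0 < u i) ∧ ∀ i, 0 < (M *ᵥ u) i

/-- Entrywise absolute value of a complex matrix. -/
def cabs {α β : Type*} (M : Matrix α β ℂ) : Matrix α β ℝ :=
  Matrix.of fun i j => ‖M i j‖

/-!
Write the equation entrywise as `(A i i + D j j) X i j = R(X) i j` with
`R(X) = X C X + B - A' X - X D'`, where `A'`, `D'` are the off-diagonal parts, and iterate
`T(X) i j = R(X) i j / (A i i + D j j)`. The real data majorize the complex ones and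
`Ã i i + D̃ j j ≤ |A i i + D j j|`, so `T` maps the box `|X| ≤ Φ̃` into itself and, on it,
`|T X - T Y| ≤ N(|X - Y|) / (Ã i i + D̃ j j)`, where `N` is the derivative of `R̃` at `Φ̃`. For
`W = x yᵀ` one has `(Ã i i + D̃ j j) W i j - N(W) i j = ((Ã - Φ̃ C̃) x) i * y j + x i * (yᵀ M) j`
with `M = D̃ - C̃ Φ̃`, so once both factors are positive `T` is a contraction for the sup norm
weighted by `W`, and Banach's fixed point theorem applies.
The iteration of `T̃` from `0` increases, keeps row sums at most `1` and converges to a nonnegative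
solution, which dominates the minimal one; hence `Φ̃ 1 ≤ 1`. The real equation then gives
`(Ã - Φ̃ C̃)(1 - Φ̃ 1) > 0`, and a small shift of `1 - Φ̃ 1` is a positive `x`. Finally `M` is a
Z-matrix with positive row sums, hence invertible with `M⁻¹ ≥ 0`, and `y = M⁻ᵀ 1` works.
-/

open Topology

section Majorant

variable {l m n E 𝕜 : Type*}

def IsMajorant [Norm E] (P : Matrix m n ℝ) (X : Matrix m n E) : Prop :=
  ∀ i j, ‖X i j‖ ≤ P i j

namespace IsMajorant

section AddGroup

variable [SeminormedAddGroup E] {P Q : Matrix m n ℝ} {X Y : Matrix m n E}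

theorem nonneg (h : IsMajorant P X) (i : m) (j : n) : 0 ≤ P i j :=
  (norm_nonneg _).trans (h i j)

theorem add (hX : IsMajorant P X) (hY : IsMajorant Q Y) : IsMajorant (P + Q) (X + Y) :=
  fun i j => (norm_add_le _ _).trans (add_le_add (hX i j) (hY i j))

theorem sub (hX : IsMajorant P X) (hY : IsMajorant Q Y) : IsMajorant (P + Q) (X - Y) :=
  fun i j => (norm_sub_le _ _).trans (add_le_add (hX i j) (hY i j))

end AddGroup

theorem mul [Fintype m] [NonUnitalSeminormedRing 𝕜] {P : Matrix l m ℝ} {Q : Matrix m n ℝ}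
    {X : Matrix l m 𝕜} {Y : Matrix m n 𝕜} (hX : IsMajorant P X) (hY : IsMajorant Q Y) :
    IsMajorant (P * Q) (X * Y) := fun i j =>
  (norm_sum_le _ _).trans <| Finset.sum_le_sum fun k _ =>
    (norm_mul_le _ _).trans (mul_le_mul (hX i k) (hY k j) (norm_nonneg _) (hX.nonneg i k))

theorem le {P X : Matrix m n ℝ} (h : IsMajorant P X) (i : m) (j : n) : X i j ≤ P i j :=
  (Real.le_norm_self _).trans (h i j)

end IsMajorant

theorem isMajorant_of_nonneg_of_le {X Y : Matrix m n ℝ} (h0 : ∀ i j, 0 ≤ X i j)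
    (h : ∀ i j, X i j ≤ Y i j) : IsMajorant Y X :=
  fun i j => (Real.norm_of_nonneg (h0 i j)).trans_le (h i j)

end Majorant

section Splitting

variable {m n K 𝕜 : Type*}

def offDiagonal [DecidableEq m] [AddGroup K] (A : Matrix m m K) : Matrix m m K :=
  A - diagonal A.diag

def nareRhs [Fintype m] [Fintype n] [DecidableEq m] [DecidableEq n] [Ring K] (A : Matrix m m K)
    (B : Matrix m n K) (C : Matrix n m K) (D : Matrix n n K) (X : Matrix m n K) : Matrix m n K :=
  X * C * X + B - offDiagonal A * X - X * offDiagonal D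

def nareRhsDeriv [Fintype m] [Fintype n] [DecidableEq m] [DecidableEq n] [Ring K]
    (A : Matrix m m K) (C : Matrix n m K) (D : Matrix n n K) (X E : Matrix m n K) :
    Matrix m n K :=
  E * C * X + X * C * E - offDiagonal A * E - E * offDiagonal D

def solveDiagSylvester [Field K] (A : Matrix m m K) (D : Matrix n n K) (R : Matrix m n K) :
    Matrix m n K :=
  of fun i j => R i j / (A i i + D j j)

def nareIter [Fintype m] [Fintype n] [DecidableEq m] [DecidableEq n] [Field K] (A : Matrix m m K)
    (B : Matrix m n K) (C : Matrix n m K) (D : Matrix n n K) (X : Matrix m n K) : Matrix m n K :=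
  solveDiagSylvester A D (nareRhs A B C D X)

theorem isMajorant_neg_offDiagonal_self [DecidableEq m] {A : Matrix m m ℝ}
    (hA : ∀ i k, i ≠ k → A i k ≤ 0) : IsMajorant (-offDiagonal A) (offDiagonal A) := fun i k => by
  by_cases h : i = k <;> simp [offDiagonal, h, abs_of_nonpos, hA]

theorem solveDiagSylvester_sub [Field K] (A : Matrix m m K) (D : Matrix n n K)
    (R R' : Matrix m n K) :
    solveDiagSylvester A D (R - R') = solveDiagSylvester A D R - solveDiagSylvester A D R' := by
  ext i j
  simp [solveDiagSylvester, sub_div]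

theorem IsMajorant.solveDiagSylvester [NormedField 𝕜] {A : Matrix m m 𝕜} {D : Matrix n n 𝕜}
    {At : Matrix m m ℝ} {Dt : Matrix n n ℝ} {R : Matrix m n 𝕜} {R' : Matrix m n ℝ}
    (h : IsMajorant R' R) (hδ : ∀ i j, 0 < At i i + Dt j j)
    (hδA : ∀ i j, At i i + Dt j j ≤ ‖A i i + D j j‖) :
    IsMajorant (_root_.solveDiagSylvester At Dt R') (_root_.solveDiagSylvester A D R) :=
  fun i j => by
    simp only [_root_.solveDiagSylvester, of_apply, norm_div]
    exact div_le_div₀ (h.nonneg i j) (h i j) (hδ i j) (hδA i j)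

variable [Fintype m] [Fintype n] [DecidableEq m] [DecidableEq n]

theorem nare_apply [CommRing K] (A : Matrix m m K) (B : Matrix m n K) (C : Matrix n m K)
    (D : Matrix n n K) (X : Matrix m n K) (i : m) (j : n) :
    (X * C * X - X * D - A * X + B) i j = nareRhs A B C D X i j - (A i i + D j j) * X i j := by
  have h : X * C * X - X * D - A * X + B =
      nareRhs A B C D X - (diagonal A.diag * X + X * diagonal D.diag) := by
    simp only [nareRhs, offDiagonal, Matrix.sub_mul, Matrix.mul_sub]
    abel
  rw [h, Matrix.sub_apply, Matrix.add_apply, diagonal_mul, mul_diagonal]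
  simp only [diag_apply]
  ring

theorem nareIter_eq_self_iff [Field K] {A : Matrix m m K} {B : Matrix m n K} {C : Matrix n m K}
    {D : Matrix n n K} (h : ∀ i j, A i i + D j j ≠ 0) (X : Matrix m n K) :
    nareIter A B C D X = X ↔ X * C * X - X * D - A * X + B = 0 := by
  simp only [← Matrix.ext_iff, nare_apply, nareIter, solveDiagSylvester, of_apply,
    Matrix.zero_apply, sub_eq_zero, div_eq_iff (h _ _), mul_comm]

theorem nareRhsDeriv_smul [CommRing K] (A : Matrix m m K) (C : Matrix n m K) (D : Matrix n n K)
    (X E : Matrix m n K) (t : K) :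
    nareRhsDeriv A C D X (t • E) = t • nareRhsDeriv A C D X E := by
  simp only [nareRhsDeriv, Matrix.smul_mul, Matrix.mul_smul, smul_add, smul_sub]

theorem continuous_nareIter (A : Matrix m m ℝ) (B : Matrix m n ℝ) (C : Matrix n m ℝ)
    (D : Matrix n n ℝ) : Continuous (nareIter A B C D) := by
  unfold nareIter nareRhs solveDiagSylvester
  fun_prop

variable {A : Matrix m m 𝕜} {B : Matrix m n 𝕜} {C : Matrix n m 𝕜} {D : Matrix n n 𝕜}
  {At : Matrix m m ℝ} {Bt : Matrix m n ℝ} {Ct : Matrix n m ℝ} {Dt : Matrix n n ℝ}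

theorem IsMajorant.nareRhs [NormedRing 𝕜] {X : Matrix m n 𝕜} {Y : Matrix m n ℝ}
    (hX : IsMajorant Y X) (hA : IsMajorant (-offDiagonal At) (offDiagonal A))
    (hB : IsMajorant Bt B) (hC : IsMajorant Ct C)
    (hD : IsMajorant (-offDiagonal Dt) (offDiagonal D)) :
    IsMajorant (_root_.nareRhs At Bt Ct Dt Y) (_root_.nareRhs A B C D X) := by
  have h := (((hX.mul hC).mul hX).add hB |>.sub (hA.mul hX)).sub (hX.mul hD)
  rwa [Matrix.neg_mul, Matrix.mul_neg, ← sub_eq_add_neg, ← sub_eq_add_neg] at h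

theorem IsMajorant.nareRhs_sub [NormedRing 𝕜] {X Y : Matrix m n 𝕜} {P E : Matrix m n ℝ}
    (hX : IsMajorant P X) (hY : IsMajorant P Y) (hE : IsMajorant E (X - Y))
    (hA : IsMajorant (-offDiagonal At) (offDiagonal A)) (hC : IsMajorant Ct C)
    (hD : IsMajorant (-offDiagonal Dt) (offDiagonal D)) :
    IsMajorant (nareRhsDeriv At Ct Dt P E)
      (_root_.nareRhs A B C D X - _root_.nareRhs A B C D Y) := by
  have h := (((hE.mul hC).mul hX).add ((hY.mul hC).mul hE) |>.sub (hA.mul hE)).sub (hE.mul hD)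
  rw [Matrix.neg_mul, Matrix.mul_neg, ← sub_eq_add_neg, ← sub_eq_add_neg] at h
  have e : _root_.nareRhs A B C D X - _root_.nareRhs A B C D Y =
      (X - Y) * C * X + Y * C * (X - Y) - offDiagonal A * (X - Y) - (X - Y) * offDiagonal D := by
    simp only [_root_.nareRhs, Matrix.sub_mul, Matrix.mul_sub]
    abel
  rwa [e]

theorem IsMajorant.nareIter [NormedField 𝕜] {X : Matrix m n 𝕜} {Y : Matrix m n ℝ}
    (hX : IsMajorant Y X) (hδ : ∀ i j, 0 < At i i + Dt j j)
    (hδA : ∀ i j, At i i + Dt j j ≤ ‖A i i + D j j‖)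
    (hA : IsMajorant (-offDiagonal At) (offDiagonal A)) (hB : IsMajorant Bt B)
    (hC : IsMajorant Ct C) (hD : IsMajorant (-offDiagonal Dt) (offDiagonal D)) :
    IsMajorant (_root_.nareIter At Bt Ct Dt Y) (_root_.nareIter A B C D X) :=
  (hX.nareRhs hA hB hC hD).solveDiagSylvester hδ hδA

end Splitting

section FixedPoint

theorem existsUnique_isFixedPt_of_dist_le {α : Type*} [MetricSpace α] [CompleteSpace α]
    {s : Set α} (hs : IsClosed s) (hne : s.Nonempty) {f : α → α} (hfs : Set.MapsTo f s s)
    {θ : ℝ} (hθ0 : 0 ≤ θ) (hθ1 : θ < 1)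
    (hf : ∀ x ∈ s, ∀ y ∈ s, dist (f x) (f y) ≤ θ * dist x y) :
    ∃! x, x ∈ s ∧ f x = x := by
  have := hs.completeSpace_coe
  have := hne.to_subtype
  have hK : ContractingWith ⟨θ, hθ0⟩ (hfs.restrict f s s) :=
    ⟨hθ1, LipschitzWith.of_dist_le_mul fun x y => hf x x.2 y y.2⟩
  obtain ⟨x, hx⟩ : ∃ x : s, Function.IsFixedPt (hfs.restrict f s s) x :=
    ⟨_, hK.fixedPoint_isFixedPt⟩
  refine ⟨x, ⟨x.2, congrArg Subtype.val hx⟩, fun y ⟨hys, hy⟩ => ?_⟩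
  exact congrArg Subtype.val (hK.fixedPoint_unique' (x := ⟨y, hys⟩) (Subtype.ext hy) hx)

theorem existsUnique_isFixedPt_of_weighted_contraction {ι κ E : Type*} [Fintype ι] [Fintype κ]
    [NormedAddCommGroup E] [NormedSpace ℝ E] [CompleteSpace E] {s : Set (ι → κ → E)}
    (hs : IsClosed s) (hne : s.Nonempty) {F : (ι → κ → E) → ι → κ → E}
    (hFs : Set.MapsTo F s s) {w : ι → κ → ℝ} (hw : ∀ i j, 0 < w i j) {θ : ℝ} (hθ0 : 0 ≤ θ)
    (hθ1 : θ < 1)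
    (hF : ∀ X ∈ s, ∀ Y ∈ s, ∀ t : ℝ, (∀ i j, ‖X i j - Y i j‖ ≤ t * w i j) →
      ∀ i j, ‖F X i j - F Y i j‖ ≤ θ * t * w i j) :
    ∃! X, X ∈ s ∧ F X = X := by
  -- Conjugating by `scale` turns the sup norm weighted by `w` into the sup norm.
  let scale : (ι → κ → E) → ι → κ → E := fun Z i j => w i j • Z i j
  let unscale : (ι → κ → E) → ι → κ → E := fun X i j => (w i j)⁻¹ • X i j
  have scale_unscale : ∀ X, scale (unscale X) = X := fun X => by
    ext i j
    simp [scale, unscale, smul_smul, (hw i j).ne']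
  obtain ⟨X₀, hX₀⟩ := hne
  obtain ⟨Z, ⟨hZs, hZ⟩, hZuniq⟩ := existsUnique_isFixedPt_of_dist_le (s := scale ⁻¹' s)
    (f := unscale ∘ F ∘ scale) (hs.preimage (by fun_prop)) ⟨unscale X₀, by simpa [scale_unscale]⟩
    (fun Z hZ => by simpa [scale_unscale] using hFs hZ) hθ0 hθ1 fun Z hZ Z' hZ' => by
      have hscale : ∀ i j, ‖scale Z i j - scale Z' i j‖ ≤ dist Z Z' * w i j := fun i j => by
        rw [← smul_sub, norm_smul, Real.norm_of_nonneg (hw i j).le, mul_comm, ← dist_eq_norm]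
        exact mul_le_mul_of_nonneg_right
          ((dist_le_pi_dist (Z i) (Z' i) j).trans (dist_le_pi_dist Z Z' i)) (hw i j).le
      refine (dist_pi_le_iff (by positivity)).2 fun i =>
        (dist_pi_le_iff (by positivity)).2 fun j => ?_
      have h := hF _ hZ _ hZ' _ hscale i j
      change dist ((w i j)⁻¹ • F (scale Z) i j) ((w i j)⁻¹ • F (scale Z') i j) ≤ _
      rw [dist_smul₀, Real.norm_of_nonneg (inv_nonneg.2 (hw i j).le), dist_eq_norm,
        inv_mul_le_iff₀ (hw i j)]
      linarith
  refine ⟨scale Z, ⟨hZs, by simpa [scale_unscale] using congrArg scale hZ⟩, ?_⟩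
  rintro X ⟨hXs, hX⟩
  rw [← scale_unscale X, hZuniq (unscale X) ⟨by simpa [scale_unscale], by simp [scale_unscale, hX]⟩]

theorem exists_lt_one_forall_le_mul {ι : Type*} [Finite ι] {a b : ι → ℝ} (h : ∀ i, a i < b i) :
    ∃ θ, 0 ≤ θ ∧ θ < 1 ∧ ∀ i, a i ≤ θ * b i := by
  have hev : ∀ᶠ θ in 𝓝[<] (1 : ℝ), θ ∈ Set.Ioo 0 1 ∧ ∀ i, a i < θ * b i := by
    refine Eventually.and (Ioo_mem_nhdsLT one_pos) (eventually_all.2 fun i => ?_)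
    refine nhdsWithin_le_nhds (Tendsto.eventually_const_lt (h i) ?_)
    simpa using (continuous_id.mul continuous_const).tendsto (1 : ℝ) (f := fun θ : ℝ => θ * b i)
  obtain ⟨θ, ⟨hθ0, hθ1⟩, hθ⟩ := hev.exists
  exact ⟨θ, hθ0.le, hθ1, fun i => (hθ i).le⟩

theorem exists_isFixedPt_mem_of_monotoneOn {α : Type*} [ConditionallyCompleteLattice α]
    [TopologicalSpace α] [OrderClosedTopology α] [SupConvergenceClass α] [T2Space α]
    {T : α → α} {a b : α} (hab : a ≤ b) (hmono : MonotoneOn T (Set.Icc a b))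
    (hcont : Continuous T) (ha : a ≤ T a) (hb : T b ≤ b) {S : Set α} (hS : IsClosed S)
    (haS : a ∈ S) (hTS : ∀ y ∈ S, y ∈ Set.Icc a b → y ≤ T y → T y ∈ S) :
    ∃ y ∈ S, y ∈ Set.Icc a b ∧ T y = y := by
  have hmaps : Set.MapsTo T (Set.Icc a b) (Set.Icc a b) := fun y hy =>
    ⟨ha.trans (hmono ⟨le_rfl, hab⟩ hy hy.1), (hmono hy ⟨hab, le_rfl⟩ hy.2).trans hb⟩
  set u : ℕ → α := fun k => T^[k] a
  have hu : ∀ k, u k ∈ S ∧ u k ∈ Set.Icc a b ∧ u k ≤ T (u k) := by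
    intro k
    induction k with
    | zero => exact ⟨haS, ⟨le_rfl, hab⟩, ha⟩
    | succ k ih =>
      simp only [u, Function.iterate_succ_apply']
      exact ⟨hTS _ ih.1 ih.2.1 ih.2.2, hmaps ih.2.1, hmono ih.2.1 (hmaps ih.2.1) ih.2.2⟩
  have hu_mono : Monotone u := monotone_nat_of_le_succ fun k => by
    simpa only [u, Function.iterate_succ_apply'] using (hu k).2.2
  have hlim : Tendsto u atTop (𝓝 (⨆ k, u k)) :=
    tendsto_atTop_ciSup hu_mono ⟨b, by rintro _ ⟨k, rfl⟩; exact (hu k).2.1.2⟩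
  refine ⟨_, hS.mem_of_tendsto hlim (.of_forall fun k => (hu k).1),
    isClosed_Icc.mem_of_tendsto hlim (.of_forall fun k => (hu k).2.1), ?_⟩
  refine tendsto_nhds_unique ?_ (hlim.comp (tendsto_add_atTop_nat 1))
  simpa only [u, Function.comp_def, Function.iterate_succ_apply'] using (hcont.tendsto _).comp hlim

end FixedPoint

section NonnegMatrix

variable {ι κ : Type*} [Fintype κ]

theorem mulVec_one_apply (M : Matrix ι κ ℝ) (i : ι) : (M *ᵥ 1) i = ∑ j, M i j := by
  simp [mulVec, dotProduct]

theorem mulVec_le_mulVec_of_nonneg {M : Matrix ι κ ℝ} (hM : ∀ i j, 0 ≤ M i j) {u v : κ → ℝ}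
    (huv : ∀ j, u j ≤ v j) (i : ι) : (M *ᵥ u) i ≤ (M *ᵥ v) i :=
  Finset.sum_le_sum fun j _ => mul_le_mul_of_nonneg_left (huv j) (hM i j)

variable [Fintype ι] {M : Matrix ι ι ℝ}

theorem mulVec_one_le_diag {i : ι} (hM : ∀ j, i ≠ j → M i j ≤ 0) : (M *ᵥ 1) i ≤ M i i := by
  classical
  rw [mulVec, dotProduct, ← Finset.add_sum_erase _ _ (Finset.mem_univ i)]
  simp only [Pi.one_apply, mul_one, add_le_iff_nonpos_right]
  exact Finset.sum_nonpos fun j hj => hM j (Finset.ne_of_mem_erase hj).symm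

theorem diag_pos_of_mulVec_one_lt {N : Matrix ι κ ℝ} {i : ι} (hM : ∀ j, i ≠ j → M i j ≤ 0)
    (hN : ∀ j, 0 ≤ N i j) (h : (N *ᵥ 1) i < (M *ᵥ 1) i) : 0 < M i i :=
  (Finset.sum_nonneg fun j _ => mul_nonneg (hN j) zero_le_one).trans_lt
    (h.trans_le (mulVec_one_le_diag hM))

theorem nonneg_of_mulVec_nonneg (hM : ∀ i j, i ≠ j → M i j ≤ 0) (hM1 : ∀ i, 0 < (M *ᵥ 1) i)
    {z : ι → ℝ} (hz : ∀ i, 0 ≤ (M *ᵥ z) i) (i : ι) : 0 ≤ z i := by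
  have := Nonempty.intro i
  obtain ⟨k, hk⟩ := Finite.exists_min z
  by_contra! hi
  have hle : (M *ᵥ z) k ≤ z k * (M *ᵥ 1) k := by
    simp only [mulVec, dotProduct, Pi.one_apply, mul_one, Finset.mul_sum]
    refine Finset.sum_le_sum fun j _ => ?_
    rcases eq_or_ne k j with rfl | hkj
    · rw [mul_comm]
    · rw [mul_comm (z k)]
      exact mul_le_mul_of_nonpos_left (hk j) (hM k j hkj)
  linarith [hz k, mul_neg_of_neg_of_pos ((hk i).trans_lt hi) (hM1 k)]

theorem exists_pos_vecMul_pos (hM : ∀ i j, i ≠ j → M i j ≤ 0) (hM1 : ∀ i, 0 < (M *ᵥ 1) i) :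
    ∃ y : ι → ℝ, (∀ j, 0 < y j) ∧ ∀ j, 0 < (y ᵥ* M) j := by
  classical
  have hinj : Function.Injective M.mulVec := fun z z' h => funext fun i =>
    le_antisymm
      (sub_nonneg.1 (nonneg_of_mulVec_nonneg hM hM1 (z := z' - z) (by simp [mulVec_sub, h]) i))
      (sub_nonneg.1 (nonneg_of_mulVec_nonneg hM hM1 (z := z - z') (by simp [mulVec_sub, h]) i))
  have hunit := mulVec_injective_iff_isUnit.1 hinj
  obtain ⟨y, hy⟩ := vecMul_surjective_iff_isUnit.2 hunit 1
  refine ⟨y, fun j => ?_, by simp [hy]⟩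
  -- `y j` is the sum of the `j`-th column `c` of `M⁻¹`, which is nonnegative and nonzero.
  obtain ⟨c, hc⟩ := mulVec_surjective_iff_isUnit.2 hunit (Pi.single j 1)
  have hc0 : ∀ i, 0 ≤ c i := nonneg_of_mulVec_nonneg hM hM1 fun i => by
    rw [hc]
    by_cases h : i = j <;> simp [h]
  have hyj : y j = ∑ i, c i := by
    have := dotProduct_mulVec y M c
    rw [hc, show y ᵥ* M = 1 from hy] at this
    simpa [dotProduct, Pi.single_apply] using this
  obtain ⟨i, hi⟩ : ∃ i, c i ≠ 0 := by
    by_contra! h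
    have : M *ᵥ c = 0 := by rw [show c = 0 from funext h, mulVec_zero]
    simpa [hc] using congrFun this j
  rw [hyj]
  exact Finset.sum_pos' (fun i _ => hc0 i) ⟨i, Finset.mem_univ _, (hc0 i).lt_of_ne' hi⟩

theorem exists_pos_mulVec_pos {P : Matrix ι ι ℝ} {q : ι → ℝ} (hq : ∀ i, 0 ≤ q i)
    (hPq : ∀ i, 0 < (P *ᵥ q) i) : ∃ x : ι → ℝ, (∀ i, 0 < x i) ∧ ∀ i, 0 < (P *ᵥ x) i := by
  have hcont : Continuous fun ε : ℝ => P *ᵥ (q + ε • 1) := by fun_prop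
  have hev : ∀ᶠ ε in 𝓝[>] (0 : ℝ), 0 < ε ∧ ∀ i, 0 < (P *ᵥ (q + ε • 1)) i := by
    refine Eventually.and self_mem_nhdsWithin (eventually_all.2 fun i => ?_)
    refine nhdsWithin_le_nhds (Tendsto.eventually_const_lt (hPq i) ?_)
    simpa using (hcont.tendsto 0).apply_nhds i
  obtain ⟨ε, hε, hx⟩ := hev.exists
  exact ⟨q + ε • 1, fun i => by simp; linarith [hq i], hx⟩

end NonnegMatrix

section RealNARE

variable {m n : Type*} [Fintype m] [Fintype n] [DecidableEq m] [DecidableEq n]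
  {At : Matrix m m ℝ} {Bt : Matrix m n ℝ} {Ct : Matrix n m ℝ} {Dt : Matrix n n ℝ}

theorem sum_nareIter_le_one (hAt : ∀ i k, i ≠ k → At i k ≤ 0) (hCt : ∀ l k, 0 ≤ Ct l k)
    (hrowA : ∀ i, (Bt *ᵥ 1) i < (At *ᵥ 1) i) (hrowD : ∀ l, (Ct *ᵥ 1) l < (Dt *ᵥ 1) l)
    (hAd : ∀ i, 0 < At i i) (hDd : ∀ j, 0 < Dt j j) {Y : Matrix m n ℝ} (hY0 : ∀ i j, 0 ≤ Y i j)
    (hYT : ∀ i j, Y i j ≤ nareIter At Bt Ct Dt Y i j) (hY1 : ∀ i, ∑ j, Y i j ≤ 1) (i : m) :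
    ∑ j, nareIter At Bt Ct Dt Y i j ≤ 1 := by
  simp only [← mulVec_one_apply] at hY1 ⊢
  set Y' := nareIter At Bt Ct Dt Y
  set R := nareRhs At Bt Ct Dt Y
  have hY' : ∀ j, At i i * Y' i j = R i j - Dt j j * Y' i j := fun j => by
    have hδ : At i i + Dt j j ≠ 0 := (add_pos (hAd i) (hDd j)).ne'
    simp only [Y', R, nareIter, solveDiagSylvester, of_apply]
    field_simp
    ring
  have hR : R - Y * diagonal Dt.diag = Y * Ct * Y + Bt - offDiagonal At * Y - Y * Dt := by
    simp only [R, nareRhs, offDiagonal, Matrix.mul_sub]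
    abel
  -- `Y ≤ Y'` lets `D̃ j j * Y i j` replace `D̃ j j * Y' i j`.
  have key : At i i * (Y' *ᵥ 1) i ≤ ((R - Y * diagonal Dt.diag) *ᵥ 1) i := by
    simp only [mulVec, dotProduct, Pi.one_apply, mul_one, Finset.mul_sum, Matrix.sub_apply,
      mul_diagonal, diag_apply, hY']
    exact Finset.sum_le_sum fun j _ => by nlinarith [hYT i j, hDd j]
  have hCY := mulVec_le_mulVec_of_nonneg hY0 (u := Ct *ᵥ (Y *ᵥ 1)) (v := Ct *ᵥ 1)
    (mulVec_le_mulVec_of_nonneg hCt (v := 1) hY1) i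
  have hAY := mulVec_le_mulVec_of_nonneg (isMajorant_neg_offDiagonal_self hAt).nonneg
    (v := 1) hY1 i
  have hDC := mulVec_le_mulVec_of_nonneg hY0 (u := Ct *ᵥ 1 - Dt *ᵥ 1) (v := 0)
    (fun l => by simpa using (hrowD l).le) i
  have hdiagA : (offDiagonal At *ᵥ 1) i = (At *ᵥ 1) i - At i i := by
    simp [offDiagonal, sub_mulVec, mulVec_diagonal]
  rw [hR] at key
  simp only [sub_mulVec, add_mulVec, neg_mulVec, ← mulVec_mulVec, mulVec_zero, mulVec_sub,
    Pi.sub_apply, Pi.add_apply, Pi.neg_apply, Pi.zero_apply] at key hAY hDC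
  refine le_of_mul_le_mul_left ?_ (hAd i)
  linarith [hrowA i]

theorem mulVec_one_le_one_of_minimal (hAt : ∀ i k, i ≠ k → At i k ≤ 0)
    (hDt : ∀ l j, l ≠ j → Dt l j ≤ 0) (hBt : ∀ i j, 0 ≤ Bt i j) (hCt : ∀ l k, 0 ≤ Ct l k)
    (hrowA : ∀ i, (Bt *ᵥ 1) i < (At *ᵥ 1) i) (hrowD : ∀ l, (Ct *ᵥ 1) l < (Dt *ᵥ 1) l)
    {Φ : Matrix m n ℝ} (hΦ0 : ∀ i j, 0 ≤ Φ i j) (hΦ : Φ * Ct * Φ - Φ * Dt - At * Φ + Bt = 0)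
    (hmin : ∀ Z : Matrix m n ℝ, (∀ i j, 0 ≤ Z i j) →
      Z * Ct * Z - Z * Dt - At * Z + Bt = 0 → ∀ i j, Φ i j ≤ Z i j) (i : m) :
    (Φ *ᵥ 1) i ≤ 1 := by
  have hAd : ∀ i, 0 < At i i := fun i => diag_pos_of_mulVec_one_lt (hAt i) (hBt i) (hrowA i)
  have hDd : ∀ j, 0 < Dt j j := fun j => diag_pos_of_mulVec_one_lt (hDt j) (hCt j) (hrowD j)
  have hδ : ∀ i j, 0 < At i i + Dt j j := fun i j => add_pos (hAd i) (hDd j)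
  have hmaj : ∀ {X Y : Matrix m n ℝ}, IsMajorant Y X →
      IsMajorant (nareIter At Bt Ct Dt Y) (nareIter At Bt Ct Dt X) := fun hX =>
    hX.nareIter hδ (fun i j => Real.le_norm_self _) (isMajorant_neg_offDiagonal_self hAt)
      (isMajorant_of_nonneg_of_le hBt fun _ _ => le_rfl)
      (isMajorant_of_nonneg_of_le hCt fun _ _ => le_rfl) (isMajorant_neg_offDiagonal_self hDt)
  have hfix := nareIter_eq_self_iff (B := Bt) (C := Ct) fun i j => (hδ i j).ne'
  obtain ⟨Y, hY1, ⟨hY0, -⟩, hYfix⟩ := exists_isFixedPt_mem_of_monotoneOn (α := m → n → ℝ)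
    (T := nareIter At Bt Ct Dt) (a := 0) (b := Φ) (S := {Y | ∀ i, ∑ j, Y i j ≤ 1})
    (fun i j => hΦ0 i j) (fun X hX Y _ hXY => (hmaj (isMajorant_of_nonneg_of_le hX.1 hXY)).le)
    (by exact continuous_nareIter At Bt Ct Dt)
    (fun i j => (hmaj (X := 0) fun i j => by simp).nonneg i j) (fun i j => by rw [(hfix Φ).2 hΦ])
    (by
      simp only [Set.ofPred_forall]
      exact isClosed_iInter fun i => isClosed_le (by fun_prop) continuous_const)
    (fun i => by simp)
    (fun Y hY hYab hYT => sum_nareIter_le_one hAt hCt hrowA hrowD hAd hDd hYab.1 hYT hY)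
  have hΦY := hmin Y hY0 ((hfix Y).1 hYfix)
  rw [mulVec_one_apply]
  exact (Finset.sum_le_sum fun j _ => hΦY i j).trans (hY1 i)

theorem exists_pos_nareRhsDeriv_lt (hDt : ∀ l j, l ≠ j → Dt l j ≤ 0) (hCt : ∀ l k, 0 ≤ Ct l k)
    (hrowA : ∀ i, (Bt *ᵥ 1) i < (At *ᵥ 1) i) (hrowD : ∀ l, (Ct *ᵥ 1) l < (Dt *ᵥ 1) l)
    {Φ : Matrix m n ℝ} (hΦ0 : ∀ i j, 0 ≤ Φ i j) (hΦ : Φ * Ct * Φ - Φ * Dt - At * Φ + Bt = 0)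
    (hΦ1 : ∀ i, (Φ *ᵥ 1) i ≤ 1) :
    ∃ W : Matrix m n ℝ, (∀ i j, 0 < W i j) ∧
      ∀ i j, nareRhsDeriv At Ct Dt Φ W i j < (At i i + Dt j j) * W i j := by
  set P := At - Φ * Ct
  set M := Dt - Ct * Φ
  have hP : ∀ i, 0 < (P *ᵥ (1 - Φ *ᵥ 1)) i := by
    have e : P *ᵥ (1 - Φ *ᵥ 1) = (At *ᵥ 1 - Bt *ᵥ 1) + Φ *ᵥ (Dt *ᵥ 1 - Ct *ᵥ 1) +
        (Φ * Ct * Φ - Φ * Dt - At * Φ + Bt) *ᵥ 1 := by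
      simp only [P, sub_mulVec, add_mulVec, mulVec_sub, ← mulVec_mulVec]
      abel
    intro i
    have hΦD := mulVec_le_mulVec_of_nonneg hΦ0 (u := 0) (v := Dt *ᵥ 1 - Ct *ᵥ 1)
      (fun l => by simpa using (hrowD l).le) i
    rw [e, hΦ, zero_mulVec, add_zero]
    simp only [mulVec_zero, Pi.add_apply, Pi.sub_apply, Pi.zero_apply] at hΦD ⊢
    linarith [hrowA i]
  obtain ⟨x, hx, hPx⟩ := exists_pos_mulVec_pos (fun i => by simpa using hΦ1 i) hP
  have hM : ∀ l j, l ≠ j → M l j ≤ 0 := fun l j h => by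
    have : 0 ≤ (Ct * Φ) l j := Finset.sum_nonneg fun k _ => mul_nonneg (hCt l k) (hΦ0 k j)
    simp only [M, Matrix.sub_apply]
    linarith [hDt l j h]
  have hM1 : ∀ l, 0 < (M *ᵥ 1) l := fun l => by
    have := mulVec_le_mulVec_of_nonneg hCt (u := Φ *ᵥ 1) (v := 1) hΦ1 l
    simp only [M, sub_mulVec, ← mulVec_mulVec, Pi.sub_apply]
    linarith [hrowD l]
  obtain ⟨y, hy, hyM⟩ := exists_pos_vecMul_pos hM hM1
  refine ⟨vecMulVec x y, fun i j => mul_pos (hx i) (hy j), fun i j => ?_⟩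
  have e : diagonal At.diag * vecMulVec x y + vecMulVec x y * diagonal Dt.diag -
      nareRhsDeriv At Ct Dt Φ (vecMulVec x y) = P * vecMulVec x y + vecMulVec x y * M := by
    simp only [P, M, nareRhsDeriv, offDiagonal, Matrix.sub_mul, Matrix.mul_sub, Matrix.mul_assoc]
    abel
  have e' := congrFun (congrFun e i) j
  simp only [mul_vecMulVec, vecMulVec_mul, Matrix.add_apply, Matrix.sub_apply, vecMulVec_apply,
    mulVec_diagonal, vecMul_diagonal, diag_apply] at e'
  rw [vecMulVec_apply]
  nlinarith [mul_pos (hPx i) (hy j), mul_pos (hx i) (hyM j)]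

end RealNARE

theorem existsUnique_nare_solution_of_majorant {m n 𝕜 : Type*} [Fintype m] [Fintype n]
    [DecidableEq m] [DecidableEq n] [RCLike 𝕜] {A : Matrix m m 𝕜} {B : Matrix m n 𝕜}
    {C : Matrix n m 𝕜} {D : Matrix n n 𝕜} {At : Matrix m m ℝ} {Bt : Matrix m n ℝ}
    {Ct : Matrix n m ℝ} {Dt : Matrix n n ℝ} (hδ : ∀ i j, 0 < At i i + Dt j j)
    (hδA : ∀ i j, At i i + Dt j j ≤ ‖A i i + D j j‖)
    (hA : IsMajorant (-offDiagonal At) (offDiagonal A)) (hB : IsMajorant Bt B)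
    (hC : IsMajorant Ct C) (hD : IsMajorant (-offDiagonal Dt) (offDiagonal D))
    {Φ : Matrix m n ℝ} (hΦ0 : ∀ i j, 0 ≤ Φ i j) (hΦ : Φ * Ct * Φ - Φ * Dt - At * Φ + Bt = 0)
    {W : Matrix m n ℝ} (hW : ∀ i j, 0 < W i j)
    (hgap : ∀ i j, nareRhsDeriv At Ct Dt Φ W i j < (At i i + Dt j j) * W i j) :
    ∃! X : Matrix m n 𝕜, X * C * X - X * D - A * X + B = 0 ∧ IsMajorant Φ X := by
  have hne : ∀ i j, A i i + D j j ≠ 0 := fun i j h => by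
    have := hδA i j
    rw [h, norm_zero] at this
    linarith [hδ i j]
  have hTΦ : nareIter At Bt Ct Dt Φ = Φ := (nareIter_eq_self_iff (fun i j => (hδ i j).ne') Φ).2 hΦ
  obtain ⟨θ, hθ0, hθ1, hθ⟩ := exists_lt_one_forall_le_mul
    (a := fun p : m × n => nareRhsDeriv At Ct Dt Φ W p.1 p.2)
    (b := fun p => (At p.1 p.1 + Dt p.2 p.2) * W p.1 p.2) fun p => hgap p.1 p.2
  simp only [← nareIter_eq_self_iff hne, and_comm (a := nareIter A B C D _ = _)]
  refine existsUnique_isFixedPt_of_weighted_contraction (s := {X : m → n → 𝕜 | IsMajorant Φ X})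
    ?_ ⟨0, fun i j => by simpa using hΦ0 i j⟩ (fun X hX => ?_) hW hθ0 hθ1
    fun X hX Y hY t ht i j => ?_
  · simp only [IsMajorant, Set.ofPred_forall]
    exact isClosed_iInter fun i => isClosed_iInter fun j => isClosed_le (by fun_prop)
      continuous_const
  · have h := IsMajorant.nareIter hX hδ hδA hA hB hC hD
    rwa [hTΦ] at h
  · have ht0 : 0 ≤ t := nonneg_of_mul_nonneg_left ((norm_nonneg _).trans (ht i j)) (hW i j)
    have hE : IsMajorant (t • W) (X - Y) := fun i j => by simpa using ht i j
    have h := ((hX.nareRhs_sub (B := B) hY hE hA hC hD).solveDiagSylvester hδ hδA) i j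
    rw [solveDiagSylvester_sub, nareRhsDeriv_smul] at h
    refine h.trans ?_
    simp only [solveDiagSylvester, of_apply, Matrix.smul_apply, smul_eq_mul]
    rw [div_le_iff₀ (hδ i j)]
    nlinarith [hθ (i, j)]

theorem wlin_le_norm {ω : ℝ} (hω : ω ∈ Set.Icc (0 : ℝ) 1) (z : ℂ) : wlin ω z ≤ ‖z‖ := by
  have := mul_le_mul_of_nonneg_left (Complex.re_le_norm z) hω.1
  have := mul_le_mul_of_nonneg_left ((le_abs_self z.im).trans (Complex.abs_im_le_norm z))
    (sub_nonneg.2 hω.2)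
  rw [wlin]
  linarith

theorem wlin_add (ω : ℝ) (z w : ℂ) : wlin ω (z + w) = wlin ω z + wlin ω w := by
  simp only [wlin, Complex.add_re, Complex.add_im]
  ring

theorem isMajorant_neg_offDiagonal_of_le_omegaComp {N : Type*} [DecidableEq N] {ω : ℝ}
    {Q : Matrix N N ℂ} {Q' : Matrix N N ℝ} (h : ∀ i j, Q' i j ≤ omegaComp ω Q i j) :
    IsMajorant (-offDiagonal Q') (offDiagonal Q) := fun i j => by
  by_cases hij : i = j
  · simp [offDiagonal, hij]
  · simpa [offDiagonal, omegaComp, hij, le_neg] using h i j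

theorem stmt3_general {m n : ℕ} (ω : ℝ) (hω : ω ∈ Set.Icc (0 : ℝ) 1)
    (A : Matrix (Fin m) (Fin m) ℂ) (B : Matrix (Fin m) (Fin n) ℂ)
    (C : Matrix (Fin n) (Fin m) ℂ) (D : Matrix (Fin n) (Fin n) ℂ)
    (At : Matrix (Fin m) (Fin m) ℝ) (Bt : Matrix (Fin m) (Fin n) ℝ)
    (Ct : Matrix (Fin n) (Fin m) ℝ) (Dt : Matrix (Fin n) (Fin n) ℝ)
    (hQtle : ∀ i j, Matrix.fromBlocks Dt (-Ct) (-Bt) At i j ≤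
      omegaComp ω (Matrix.fromBlocks D (-C) (-B) A) i j)
    (hQt1 : ∀ i, 0 < ((Matrix.fromBlocks Dt (-Ct) (-Bt) At) *ᵥ 1) i)
    (Φt : Matrix (Fin m) (Fin n) ℝ)
    (hΦtPos : ∀ i j, 0 ≤ Φt i j)
    (hΦtSol : Φt * Ct * Φt - Φt * Dt - At * Φt + Bt = 0)
    (hΦtMin : ∀ Z : Matrix (Fin m) (Fin n) ℝ, (∀ i j, 0 ≤ Z i j) →
      Z * Ct * Z - Z * Dt - At * Z + Bt = 0 → ∀ i j, Φt i j ≤ Z i j) :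
    ∃! Φ : Matrix (Fin m) (Fin n) ℂ,
      Φ * C * Φ - Φ * D - A * Φ + B = 0 ∧ ∀ i j, ‖Φ i j‖ ≤ Φt i j := by
  have hQ := isMajorant_neg_offDiagonal_of_le_omegaComp hQtle
  have hA : IsMajorant (-offDiagonal At) (offDiagonal A) := fun i k => by
    simpa [offDiagonal, diagonal_apply] using hQ (.inr i) (.inr k)
  have hB : IsMajorant Bt B := fun i j => by simpa [offDiagonal] using hQ (.inr i) (.inl j)
  have hC : IsMajorant Ct C := fun l k => by simpa [offDiagonal] using hQ (.inl l) (.inr k)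
  have hD : IsMajorant (-offDiagonal Dt) (offDiagonal D) := fun l j => by
    simpa [offDiagonal, diagonal_apply] using hQ (.inl l) (.inl j)
  have hAt : ∀ i k, i ≠ k → At i k ≤ 0 := fun i k h => by simpa [offDiagonal, h] using hA.nonneg i k
  have hDt : ∀ l j, l ≠ j → Dt l j ≤ 0 := fun l j h => by simpa [offDiagonal, h] using hD.nonneg l j
  have hrowA : ∀ i, (Bt *ᵥ 1) i < (At *ᵥ 1) i := fun i => by
    simpa [fromBlocks_mulVec, neg_mulVec, ← sub_eq_neg_add] using hQt1 (.inr i)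
  have hrowD : ∀ l, (Ct *ᵥ 1) l < (Dt *ᵥ 1) l := fun l => by
    simpa [fromBlocks_mulVec, neg_mulVec, ← sub_eq_add_neg] using hQt1 (.inl l)
  have hδ : ∀ i j, 0 < At i i + Dt j j := fun i j =>
    add_pos (diag_pos_of_mulVec_one_lt (hAt i) (hB.nonneg i) (hrowA i))
      (diag_pos_of_mulVec_one_lt (hDt j) (hC.nonneg j) (hrowD j))
  have hδA : ∀ i j, At i i + Dt j j ≤ ‖A i i + D j j‖ := fun i j => by
    have hAi := hQtle (.inr i) (.inr i)
    have hDj := hQtle (.inl j) (.inl j)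
    simp only [fromBlocks_apply₂₂, fromBlocks_apply₁₁, omegaComp, of_apply, if_true] at hAi hDj
    exact (add_le_add hAi hDj).trans ((wlin_add ω _ _).symm.trans_le (wlin_le_norm hω _))
  obtain ⟨W, hW, hgap⟩ := exists_pos_nareRhsDeriv_lt hDt hC.nonneg hrowA hrowD hΦtPos hΦtSol
    (mulVec_one_le_one_of_minimal hAt hDt hB.nonneg hC.nonneg hrowA hrowD hΦtPos hΦtSol hΦtMin)
  exact existsUnique_nare_solution_of_majorant hδ hδA hA hB hC hD hΦtPos hΦtSol hW hgap

/-- Existence and uniqueness of the solution `Φ` of the NARE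
`XCX − XD − AX + B = 0` with `|Φ| ≤ Φ̃`, where `Φ̃` is the minimal nonnegative solution of the
dominating real M-matrix NARE. -/
theorem stmt3 {m n : ℕ} (ω : ℝ) (hω : ω ∈ Set.Icc (0 : ℝ) 1)
    (A : Matrix (Fin m) (Fin m) ℂ) (B : Matrix (Fin m) (Fin n) ℂ)
    (C : Matrix (Fin n) (Fin m) ℂ) (D : Matrix (Fin n) (Fin n) ℂ)
    (At : Matrix (Fin m) (Fin m) ℝ) (Bt : Matrix (Fin m) (Fin n) ℝ)
    (Ct : Matrix (Fin n) (Fin m) ℝ) (Dt : Matrix (Fin n) (Fin n) ℝ)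
    (hQ : IsNonsingMMatrix (omegaComp ω (Matrix.fromBlocks D (-C) (-B) A)))
    (hQ1 : ∀ i, 0 < ((omegaComp ω (Matrix.fromBlocks D (-C) (-B) A)) *ᵥ 1) i)
    (hQt : IsNonsingMMatrix (Matrix.fromBlocks Dt (-Ct) (-Bt) At))
    (hQtle : ∀ i j, Matrix.fromBlocks Dt (-Ct) (-Bt) At i j ≤
      omegaComp ω (Matrix.fromBlocks D (-C) (-B) A) i j)
    (hQt1 : ∀ i, 0 < ((Matrix.fromBlocks Dt (-Ct) (-Bt) At) *ᵥ 1) i)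
    (Φt : Matrix (Fin m) (Fin n) ℝ)
    (hΦtPos : ∀ i j, 0 ≤ Φt i j)
    (hΦtSol : Φt * Ct * Φt - Φt * Dt - At * Φt + Bt = 0)
    (hΦtMin : ∀ Z : Matrix (Fin m) (Fin n) ℝ, (∀ i j, 0 ≤ Z i j) →
      Z * Ct * Z - Z * Dt - At * Z + Bt = 0 → ∀ i j, Φt i j ≤ Z i j) :
    ∃! Φ : Matrix (Fin m) (Fin n) ℂ,
      Φ * C * Φ - Φ * D - A * Φ + B = 0 ∧ ∀ i j, ‖Φ i j‖ ≤ Φt i j :=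
  stmt3_general ω hω A B C D At Bt Ct Dt hQtle hQt1 Φt hΦtPos hΦtSol hΦtMin
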